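/- The contraction g is symmetric (i.e. its Hodge dual T squares to a scalar on 1-forms) precisely when β = q⁶α: given nonzero α, β, γ, m ∈ ℂ, there exists c ∈ ℂ with T(T(x)) = c·x for all x ∈ Λ¹ if and only if β = q⁶ α. -/

import Mathlib

/-! `T²` acts on each basis 1-form `ω_a` by a scalar `s_a`, and the `ω_a` are nonzero (they survive
in the square-zero extension `ℂ ⊕ V`, where every quadratic relation holds trivially) and span
`Λ¹`. Hence `T²` is a scalar on `Λ¹` iff `s₋ = s₊ = s_z`. Writing these out,
`s₊ = s_z` reads `q⁶ α = β`, and then `s₋ = s₊` holds automatically. -/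

open TensorProduct

noncomputable section

/-- The 3-dimensional complex vector space with basis `ω 0 = ω₋`, `ω 1 = ω₊`, `ω 2 = ω_z`. -/
abbrev V : Type := Fin 3 → ℂ

/-- The distinguished basis `(ω₋, ω₊, ω_z)` of `V`. -/
def ω : Fin 3 → V := fun i => Pi.basisFun ℂ (Fin 3) i

/-- The degree-2 relations of the exterior algebra of the 3d calculus: each generator is
set equal to `0`.  `RingQuot` of this relation is the quotient of the tensor algebra by the
two-sided ideal generated by the six elements. -/
inductive rel (q : ℝ) : TensorAlgebra ℂ V → TensorAlgebra ℂ V → Prop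
  | mm : rel q (TensorAlgebra.ι ℂ (ω 0) * TensorAlgebra.ι ℂ (ω 0)) 0
  | pp : rel q (TensorAlgebra.ι ℂ (ω 1) * TensorAlgebra.ι ℂ (ω 1)) 0
  | zz : rel q (TensorAlgebra.ι ℂ (ω 2) * TensorAlgebra.ι ℂ (ω 2)) 0
  | mp : rel q (TensorAlgebra.ι ℂ (ω 0) * TensorAlgebra.ι ℂ (ω 1) +
      ((q : ℂ) ^ 2)⁻¹ • (TensorAlgebra.ι ℂ (ω 1) * TensorAlgebra.ι ℂ (ω 0))) 0
  | zm : rel q (TensorAlgebra.ι ℂ (ω 2) * TensorAlgebra.ι ℂ (ω 0) +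
      (q : ℂ) ^ 4 • (TensorAlgebra.ι ℂ (ω 0) * TensorAlgebra.ι ℂ (ω 2))) 0
  | zp : rel q (TensorAlgebra.ι ℂ (ω 2) * TensorAlgebra.ι ℂ (ω 1) +
      ((q : ℂ) ^ 4)⁻¹ • (TensorAlgebra.ι ℂ (ω 1) * TensorAlgebra.ι ℂ (ω 2))) 0

/-- The exterior algebra `Λ` of the 3d calculus. -/
abbrev Lam (q : ℝ) : Type := RingQuot (rel q)

/-- The quotient map `T(V) → Λ`. -/
def mkL (q : ℝ) : TensorAlgebra ℂ V →ₐ[ℂ] Lam q := RingQuot.mkAlgHom ℂ (rel q)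

/-- The degree-`k` component `Λᵏ` of `Λ`: the image of the `k`-th power of the degree-1
part of the tensor algebra (the grading induced from the tensor algebra). -/
def gradeL (q : ℝ) (k : ℕ) : Submodule ℂ (Lam q) :=
  Submodule.map (mkL q).toLinearMap
    ((LinearMap.range (TensorAlgebra.ι ℂ : V →ₗ[ℂ] TensorAlgebra ℂ V)) ^ k)

/-- The images `ω₋, ω₊, ω_z` of the basis 1-forms in `Λ¹`. -/
def ωL (q : ℝ) (a : Fin 3) : Lam q := mkL q (TensorAlgebra.ι ℂ (ω a))

/-- `f₋ = ω₋∧ω_z ∈ Λ²`. -/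
def fm (q : ℝ) : Lam q := mkL q (TensorAlgebra.ι ℂ (ω 0) * TensorAlgebra.ι ℂ (ω 2))

/-- `f₊ = ω₊∧ω_z ∈ Λ²`. -/
def fp (q : ℝ) : Lam q := mkL q (TensorAlgebra.ι ℂ (ω 1) * TensorAlgebra.ι ℂ (ω 2))

/-- `f_z = ω₋∧ω₊ ∈ Λ²`. -/
def fz (q : ℝ) : Lam q := mkL q (TensorAlgebra.ι ℂ (ω 0) * TensorAlgebra.ι ℂ (ω 1))

/-- The top form `θ = ω₋∧ω₊∧ω_z ∈ Λ³`. -/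
def θL (q : ℝ) : Lam q :=
  mkL q (TensorAlgebra.ι ℂ (ω 0) * TensorAlgebra.ι ℂ (ω 1) * TensorAlgebra.ι ℂ (ω 2))

/-- `λ₂ = 1 + q²`. -/
def lam2 (q : ℝ) : ℂ := 1 + (q : ℂ) ^ 2

/-- `λ₃ = 1 + 2q² + 2q⁴ + q⁶`. -/
def lam3 (q : ℝ) : ℂ := 1 + 2 * (q : ℂ) ^ 2 + 2 * (q : ℂ) ^ 4 + (q : ℂ) ^ 6

/-- `T : Λ → Λ` is the Hodge operator of the left-invariant contraction
`g(ω₋,ω₊) = α`, `g(ω₊,ω₋) = β`, `g(ω_z,ω_z) = γ` with volume form `μ = mθ`: these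
equations pin down `T` on the basis `1, ω₋, ω₊, ω_z, f₋, f₊, f_z, θ` of `Λ`. -/
def IsHodge (q : ℝ) (α β γ m : ℂ) (T : Lam q →ₗ[ℂ] Lam q) : Prop :=
  T 1 = m • θL q ∧
  T (ωL q 0) = (-(((q : ℂ) ^ 2)⁻¹ * m * β)) • fm q ∧
  T (ωL q 1) = (m * α) • fp q ∧
  T (ωL q 2) = (m * γ) • fz q ∧
  T (fm q) = (2 * ((q : ℂ) ^ 4)⁻¹ * (lam2 q)⁻¹ * m * β * γ) • ωL q 0 ∧
  T (fp q) = (-(2 * (q : ℂ) ^ 6 * (lam2 q)⁻¹ * m * α * γ)) • ωL q 1 ∧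
  T (fz q) = (-(2 * (lam2 q)⁻¹ * m * α * β)) • ωL q 2 ∧
  T (θL q) = (-(6 * (q : ℂ) ^ 4 * (lam3 q)⁻¹ * m * α * β * γ)) • (1 : Lam q)

theorem exists_smul_eq_on_span_iff {K M ι : Type*} [Field K] [AddCommGroup M] [Module K M]
    (S : M →ₗ[K] M) {v : ι → M} (hv : ∀ i, v i ≠ 0) {s : ι → K}
    (hs : ∀ i, S (v i) = s i • v i) :
    (∃ c : K, ∀ x ∈ Submodule.span K (Set.range v), S x = c • x) ↔ ∃ c : K, ∀ i, s i = c := by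
  constructor
  · rintro ⟨c, hc⟩
    refine ⟨c, fun i => smul_left_injective K (hv i) ?_⟩
    simpa only [hs] using hc (v i) (Submodule.subset_span ⟨i, rfl⟩)
  · rintro ⟨c, hc⟩
    have hrange : Set.EqOn S (c • LinearMap.id : M →ₗ[K] M) (Set.range v) := by
      rintro _ ⟨i, rfl⟩
      simp only [hs, hc, LinearMap.smul_apply, LinearMap.id_apply]
    exact ⟨c, fun x hx => LinearMap.eqOn_span' hrange hx⟩

theorem gradeL_one_eq_span (q : ℝ) : gradeL q 1 = Submodule.span ℂ (Set.range (ωL q)) := by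
  have hω : Set.range (ωL q) = ((_root_.mkL q).toLinearMap ∘ₗ TensorAlgebra.ι ℂ) '' Set.range ω := by
    rw [← Set.range_comp]; rfl
  rw [gradeL, pow_one, LinearMap.range_eq_map, ← (Pi.basisFun ℂ (Fin 3)).span_eq, hω,
    ← Submodule.map_span, Submodule.map_comp]
  rfl

def toTrivSqZeroExt (q : ℝ) : Lam q →ₐ[ℂ] TrivSqZeroExt ℂ V :=
  RingQuot.liftAlgHom ℂ ⟨TensorAlgebra.lift ℂ (TrivSqZeroExt.inrHom ℂ V), by
    rintro x y h
    induction h <;>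
      simp [TensorAlgebra.lift_ι_apply, TrivSqZeroExt.inrHom_apply, TrivSqZeroExt.inr_mul_inr]⟩

theorem toTrivSqZeroExt_ωL (q : ℝ) (a : Fin 3) :
    toTrivSqZeroExt q (ωL q a) = TrivSqZeroExt.inr (ω a) := by
  rw [ωL, _root_.mkL, toTrivSqZeroExt, RingQuot.liftAlgHom_mkAlgHom_apply]
  simp [TensorAlgebra.lift_ι_apply]

theorem ωL_ne_zero (q : ℝ) (a : Fin 3) : ωL q a ≠ 0 := by
  intro h
  have := congrArg (fun x => (toTrivSqZeroExt q x).snd) h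
  simp only [toTrivSqZeroExt_ωL, map_zero, TrivSqZeroExt.snd_inr, TrivSqZeroExt.snd_zero] at this
  exact (Pi.basisFun ℂ (Fin 3)).ne_zero a this

def hodgeSqEigenvalue (q : ℝ) (α β γ m : ℂ) : Fin 3 → ℂ :=
  ![-(((q : ℂ) ^ 2)⁻¹ * m * β) * (2 * ((q : ℂ) ^ 4)⁻¹ * (lam2 q)⁻¹ * m * β * γ),
    m * α * -(2 * (q : ℂ) ^ 6 * (lam2 q)⁻¹ * m * α * γ),
    m * γ * -(2 * (lam2 q)⁻¹ * m * α * β)]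

theorem IsHodge.apply_apply_ωL {q : ℝ} {α β γ m : ℂ} {T : Lam q →ₗ[ℂ] Lam q}
    (hT : IsHodge q α β γ m T) (a : Fin 3) :
    T (T (ωL q a)) = hodgeSqEigenvalue q α β γ m a • ωL q a := by
  obtain ⟨-, hm, hp, hz, hfm, hfp, hfz, -⟩ := hT
  match a with
  | 0 => rw [hm, map_smul, hfm, smul_smul]; rfl
  | 1 => rw [hp, map_smul, hfp, smul_smul]; rfl
  | 2 => rw [hz, map_smul, hfz, smul_smul]; rfl

theorem lam2_ne_zero (q : ℝ) : lam2 q ≠ 0 := by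
  rw [lam2, ← Complex.ofReal_pow, ← Complex.ofReal_one, ← Complex.ofReal_add]
  exact_mod_cast (by positivity : (1 + q ^ 2 : ℝ) ≠ 0)

theorem hodgeSqEigenvalue_const_iff {q : ℝ} (hq : q ≠ 0) {α β γ m : ℂ} (hα : α ≠ 0)
    (hγ : γ ≠ 0) (hm : m ≠ 0) :
    (∃ c : ℂ, ∀ a, hodgeSqEigenvalue q α β γ m a = c) ↔ β = (q : ℂ) ^ 6 * α := by
  have hqC : (q : ℂ) ≠ 0 := by exact_mod_cast hq
  have hlam := lam2_ne_zero q
  constructor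
  · rintro ⟨c, hc⟩
    have key : m * α * -(2 * (q : ℂ) ^ 6 * (lam2 q)⁻¹ * m * α * γ) =
        m * γ * -(2 * (lam2 q)⁻¹ * m * α * β) := (hc 1).trans (hc 2).symm
    have hne : 2 * (lam2 q)⁻¹ * m ^ 2 * α * γ ≠ 0 := by simp [*]
    apply mul_left_cancel₀ hne
    linear_combination key
  · rintro rfl
    refine ⟨-(2 * (q : ℂ) ^ 6 * (lam2 q)⁻¹ * m ^ 2 * α ^ 2 * γ), fun a => ?_⟩
    fin_cases a <;> simp [hodgeSqEigenvalue] <;> field_simp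

theorem hodge_symmetric_iff_general (q : ℝ) (hq0 : 0 < q)
    (α β γ m : ℂ) (hα : α ≠ 0) (hγ : γ ≠ 0) (hm : m ≠ 0)
    (T : Lam q →ₗ[ℂ] Lam q) (hT : IsHodge q α β γ m T) :
    (∃ c : ℂ, ∀ x ∈ gradeL q 1, T (T x) = c • x) ↔ β = (q : ℂ) ^ 6 * α := by
  rw [gradeL_one_eq_span, ← hodgeSqEigenvalue_const_iff hq0.ne' hα hγ hm]
  exact exists_smul_eq_on_span_iff (T ∘ₗ T) (ωL_ne_zero q) hT.apply_apply_ωL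

/-- `T² ` is a scalar on `Λ¹` (the contraction is *symmetric*)
if and only if `β = q⁶ α`. -/
theorem hodge_symmetric_iff (q : ℝ) (hq0 : 0 < q) (hq1 : q < 1)
    (α β γ m : ℂ) (hα : α ≠ 0) (hβ : β ≠ 0) (hγ : γ ≠ 0) (hm : m ≠ 0)
    (T : Lam q →ₗ[ℂ] Lam q) (hT : IsHodge q α β γ m T) :
    (∃ c : ℂ, ∀ x ∈ gradeL q 1, T (T x) = c • x) ↔ β = (q : ℂ) ^ 6 * α :=
  hodge_symmetric_iff_general q hq0 α β γ m hα hγ hm T hT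

end
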